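/- arXiv:2304.00856 — 2 statements merged into one kernel-verified Lean document; each statement's English description precedes it below -/
import Mathlib

section
/- Let Ω = (0,R) × (-a,a) with measure r dr dz, ε₂ ∈ (0,1), and let Γ : Ω → ℝ be smooth with Γ(R, z) = 0 for all z and Γ periodic in z. Then there exists c > 0 independent of Γ such that (∫_Ω |Γ/r^{1-ε₂}|² r dr dz)^{1/2} ≤ c·R^{ε₂}·(∫_Ω |∇Γ|² r dr dz)^{1/2}. -/
open Real Set MeasureTheory

lemma cs_interval {r R : ℝ} (hr : 0 < r) (hrR : r < R) (h : ℝ → ℝ) (hh : Continuous h) :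
    (∫ s in r..R, h s) ^ 2 ≤ (Real.log R - Real.log r) * ∫ s in r..R, (h s) ^ 2 * s := by
  have hle : r ≤ R := hrR.le
  set μ := volume.restrict (Ioc r R) with hμ
  haveI : IsFiniteMeasure μ := by
    constructor
    rw [hμ, Measure.restrict_apply_univ, Real.volume_Ioc]
    exact ENNReal.ofReal_lt_top
  set f : ℝ → ℝ := fun s => |h s| * Real.sqrt s with hf
  set g : ℝ → ℝ := fun s => (Real.sqrt s)⁻¹ with hg
  have hpq : Real.HolderConjugate 2 2 := ⟨by norm_num, by norm_num, by norm_num⟩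
  have hfm : AEStronglyMeasurable f μ := ((hh.abs.mul Real.continuous_sqrt)).aestronglyMeasurable
  have hgm : AEStronglyMeasurable g μ :=
    (Real.continuous_sqrt.measurable.inv).aestronglyMeasurable
  have hfb : MemLp f 2 μ := by
    obtain ⟨M, hM⟩ := (isCompact_Icc (a := r) (b := R)).exists_bound_of_continuousOn
      (hh.abs.mul Real.continuous_sqrt).continuousOn
    refine MemLp.of_bound hfm M ?_
    refine (ae_restrict_iff' measurableSet_Ioc).2 (Filter.Eventually.of_forall fun s hs => ?_)
    exact hM s (Ioc_subset_Icc_self hs)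
  have hgb : MemLp g 2 μ := by
    refine MemLp.of_bound hgm (Real.sqrt r)⁻¹ ?_
    refine (ae_restrict_iff' measurableSet_Ioc).2 (Filter.Eventually.of_forall fun s hs => ?_)
    rw [Real.norm_eq_abs, abs_of_nonneg (inv_nonneg.2 (Real.sqrt_nonneg _))]
    exact inv_anti₀ (Real.sqrt_pos.2 hr) (Real.sqrt_le_sqrt hs.1.le)
  have hCS := integral_mul_le_Lp_mul_Lq_of_nonneg hpq
    (μ := μ) (f := f) (g := g)
    (Filter.Eventually.of_forall fun s => mul_nonneg (abs_nonneg _) (Real.sqrt_nonneg _))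
    (Filter.Eventually.of_forall fun s => inv_nonneg.2 (Real.sqrt_nonneg _))
    (by rwa [show ENNReal.ofReal (2:ℝ) = 2 by norm_num])
    (by rwa [show ENNReal.ofReal (2:ℝ) = 2 by norm_num])
  have e1 : ∫ s, f s * g s ∂μ = ∫ s in r..R, |h s| := by
    rw [intervalIntegral.integral_of_le hle]
    refine setIntegral_congr_fun measurableSet_Ioc fun s hs => ?_
    have hs0 : 0 < Real.sqrt s := Real.sqrt_pos.2 (hr.trans hs.1)
    simp only [hf, hg]
    field_simp
  have e2 : ∫ s, f s ^ (2:ℝ) ∂μ = ∫ s in r..R, (h s) ^ 2 * s := by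
    rw [intervalIntegral.integral_of_le hle]
    refine setIntegral_congr_fun measurableSet_Ioc fun s hs => ?_
    have hs0 : (0:ℝ) ≤ s := (hr.trans hs.1).le
    rw [show (2:ℝ) = ((2:ℕ):ℝ) by norm_num, Real.rpow_natCast]
    rw [hf, mul_pow, sq_abs, Real.sq_sqrt hs0]
  have e3 : ∫ s, g s ^ (2:ℝ) ∂μ = Real.log R - Real.log r := by
    have : ∫ s, g s ^ (2:ℝ) ∂μ = ∫ s in r..R, s⁻¹ := by
      rw [intervalIntegral.integral_of_le hle]
      refine setIntegral_congr_fun measurableSet_Ioc fun s hs => ?_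
      have hs0 : (0:ℝ) ≤ s := (hr.trans hs.1).le
      rw [show (2:ℝ) = ((2:ℕ):ℝ) by norm_num, Real.rpow_natCast]
      rw [hg, inv_pow, Real.sq_sqrt hs0]
    rw [this, integral_inv_of_pos hr (hr.trans hrR),
      Real.log_div (hr.trans hrR).ne' hr.ne']
  rw [e1, e2, e3] at hCS
  have hX : (0:ℝ) ≤ ∫ s in r..R, (h s) ^ 2 * s :=
    intervalIntegral.integral_nonneg hle fun s hs =>
      mul_nonneg (sq_nonneg _) ((hr.trans_le hs.1).le)
  have hY : (0:ℝ) ≤ Real.log R - Real.log r :=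
    sub_nonneg.2 (Real.log_le_log hr hle)
  have habs : |∫ s in r..R, h s| ≤ ∫ s in r..R, |h s| :=
    intervalIntegral.abs_integral_le_integral_abs hle
  have hrhs : ((∫ s in r..R, (h s) ^ 2 * s) ^ ((1:ℝ)/2) *
      (Real.log R - Real.log r) ^ ((1:ℝ)/2)) ^ 2 =
      (Real.log R - Real.log r) * ∫ s in r..R, (h s) ^ 2 * s := by
    rw [mul_pow, ← Real.rpow_natCast (_ ^ ((1:ℝ)/2)) 2, ← Real.rpow_natCast ((Real.log R - Real.log r) ^ ((1:ℝ)/2)) 2,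
      ← Real.rpow_mul hX, ← Real.rpow_mul hY]
    norm_num [Real.rpow_one]
    ring
  calc (∫ s in r..R, h s) ^ 2 = |∫ s in r..R, h s| ^ 2 := (sq_abs _).symm
    _ ≤ (∫ s in r..R, |h s|) ^ 2 := by
        apply pow_le_pow_left₀ (abs_nonneg _) habs
    _ ≤ ((∫ s in r..R, (h s) ^ 2 * s) ^ ((1:ℝ)/2) *
        (Real.log R - Real.log r) ^ ((1:ℝ)/2)) ^ 2 := by
        exact pow_le_pow_left₀ (intervalIntegral.integral_nonneg hle fun s _ => abs_nonneg _) hCS 2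
    _ = _ := hrhs

lemma hardy_pt {R : ℝ} (Γ : ℝ × ℝ → ℝ) (hΓ : ContDiff ℝ (⊤ : ℕ∞) Γ) (z : ℝ)
    (hz : Γ (R, z) = 0) {r : ℝ} (hr : 0 < r) (hrR : r < R) :
    Γ (r, z) ^ 2 ≤ (Real.log R - Real.log r) *
      ∫ s in (0:ℝ)..R, ‖fderiv ℝ Γ (s, z)‖ ^ 2 * s := by
  set h : ℝ → ℝ := fun s => fderiv ℝ Γ (s, z) (1, 0) with hh
  have hfc : Continuous (fderiv ℝ Γ) := hΓ.continuous_fderiv (by simp)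
  have hhc : Continuous h :=
    (hfc.comp (continuous_id.prodMk continuous_const)).clm_apply continuous_const
  have hderiv : ∀ s ∈ uIcc r R, HasDerivAt (fun s => Γ (s, z)) (h s) s := by
    intro s _
    have h1 : HasFDerivAt Γ (fderiv ℝ Γ (s, z)) (s, z) :=
      (hΓ.differentiable (by simp)).differentiableAt.hasFDerivAt
    have h2 : HasDerivAt (fun s : ℝ => (s, z)) ((1 : ℝ), (0 : ℝ)) s :=
      (hasDerivAt_id s).prodMk (hasDerivAt_const s z)
    exact h1.comp_hasDerivAt s h2
  have hint : ∫ s in r..R, h s = -Γ (r, z) := by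
    rw [intervalIntegral.integral_eq_sub_of_hasDerivAt hderiv (hhc.intervalIntegrable r R), hz]
    ring
  have key : Γ (r, z) ^ 2 = (∫ s in r..R, h s) ^ 2 := by rw [hint]; ring
  rw [key]
  refine le_trans (cs_interval hr hrR h hhc) ?_
  have hY : (0:ℝ) ≤ Real.log R - Real.log r := sub_nonneg.2 (Real.log_le_log hr hrR.le)
  refine mul_le_mul_of_nonneg_left ?_ hY
  have step1 : (∫ s in r..R, (h s) ^ 2 * s) ≤ ∫ s in r..R, ‖fderiv ℝ Γ (s, z)‖ ^ 2 * s := by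
    refine intervalIntegral.integral_mono_on hrR.le
      ((hhc.pow 2).mul continuous_id |>.intervalIntegrable r R)
      (((hfc.comp (continuous_id.prodMk continuous_const)).norm.pow 2).mul continuous_id
        |>.intervalIntegrable r R) fun s hs => ?_
    have hb : |h s| ≤ ‖fderiv ℝ Γ (s, z)‖ := by
      have := (fderiv ℝ Γ (s, z)).le_opNorm ((1:ℝ), (0:ℝ))
      have hn : ‖((1:ℝ), (0:ℝ))‖ = 1 := by
        simp [Prod.norm_def]
      rw [hn, mul_one] at this
      exact this
    have : (h s) ^ 2 ≤ ‖fderiv ℝ Γ (s, z)‖ ^ 2 := by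
      rw [← sq_abs (h s)]
      exact pow_le_pow_left₀ (abs_nonneg _) hb 2
    exact mul_le_mul_of_nonneg_right this (hr.le.trans hs.1)
  refine step1.trans ?_
  refine intervalIntegral.integral_mono_interval hr.le hrR.le (le_refl R) ?_
    (((hfc.comp (continuous_id.prodMk continuous_const)).norm.pow 2).mul continuous_id
      |>.intervalIntegrable 0 R)
  refine (ae_restrict_iff' measurableSet_Ioc).2 (Filter.Eventually.of_forall fun s hs => ?_)
  exact mul_nonneg (sq_nonneg _) hs.1.le

theorem weighted_hardy_inequality (R a ε₂ : ℝ) (hR : 0 < R) (ha : 0 < a)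
    (hε₂ : ε₂ ∈ Ioo (0 : ℝ) 1) :
    ∃ c : ℝ, 0 < c ∧ ∀ Γ : ℝ × ℝ → ℝ, ContDiff ℝ (⊤ : ℕ∞) Γ →
      (∀ z : ℝ, Γ (R, z) = 0) → (∀ r z : ℝ, Γ (r, z + 2 * a) = Γ (r, z)) →
      Real.sqrt (∫ p in Ioo (0 : ℝ) R ×ˢ Ioo (-a) a,
          |Γ p / p.1 ^ (1 - ε₂)| ^ 2 * p.1) ≤
        c * R ^ ε₂ * Real.sqrt (∫ p in Ioo (0 : ℝ) R ×ˢ Ioo (-a) a,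
          ‖fderiv ℝ Γ p‖ ^ 2 * p.1) := by
  obtain ⟨hε0, hε1⟩ := hε₂
  refine ⟨ε₂⁻¹, inv_pos.2 hε0, ?_⟩
  intro Γ hΓ hzero _
  set I1 : Set ℝ := Ioo (0:ℝ) R with hI1
  set I2 : Set ℝ := Ioo (-a) a with hI2
  set S : Set (ℝ × ℝ) := I1 ×ˢ I2 with hS
  set Fl : ℝ × ℝ → ℝ := fun p => |Γ p / p.1 ^ (1 - ε₂)| ^ 2 * p.1 with hFl
  set Fr : ℝ × ℝ → ℝ := fun p => ‖fderiv ℝ Γ p‖ ^ 2 * p.1 with hFr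
  have hfc : Continuous (fderiv ℝ Γ) := hΓ.continuous_fderiv (by simp)
  have hFrc : Continuous Fr := (hfc.norm.pow 2).mul continuous_fst
  set E : ℝ → ℝ := fun z => ∫ s in (0:ℝ)..R, Fr (s, z) with hE
  have hEc : Continuous E := by
    refine _root_.intervalIntegral.continuous_parametric_intervalIntegral_of_continuous' (μ := volume)
      (f := fun z s => Fr (s, z)) ?_ 0 R
    exact hFrc.comp ((continuous_snd).prodMk continuous_fst)
  have hEnn : ∀ z, 0 ≤ E z := fun z =>
    intervalIntegral.integral_nonneg hR.le fun s hs =>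
      mul_nonneg (sq_nonneg _) hs.1
  set C : ℝ := R ^ ε₂ / ε₂ with hC
  have hC0 : 0 ≤ C := div_nonneg (Real.rpow_nonneg hR.le _) hε0.le
  have hSm : MeasurableSet S := measurableSet_Ioo.prod measurableSet_Ioo
  -- pointwise bound
  have hpt : ∀ p ∈ S, Fl p ≤ (C * E p.2) * p.1 ^ (ε₂ - 1) := by
    rintro ⟨r, z⟩ ⟨hr, hz⟩
    obtain ⟨hr0, hrR⟩ := hr
    have h1 : Γ (r, z) ^ 2 ≤ (Real.log R - Real.log r) * E z :=
      hardy_pt Γ hΓ z (hzero z) hr0 hrR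
    have e : Fl (r, z) = Γ (r, z) ^ 2 * r ^ (2 * ε₂ - 1) := by
      simp only [hFl, sq_abs, div_pow]
      have h2 : (r ^ (1 - ε₂)) ^ 2 = r ^ (2 - 2 * ε₂) := by
        rw [← Real.rpow_natCast (r ^ (1 - ε₂)) 2, ← Real.rpow_mul hr0.le]
        norm_num
        ring_nf
      rw [h2, div_eq_mul_inv, ← Real.rpow_neg hr0.le, mul_assoc]
      congr 1
      nth_rewrite 2 [show r = r ^ (1:ℝ) from (Real.rpow_one r).symm]
      rw [← Real.rpow_add hr0]
      ring_nf
    have hlog : Real.log R - Real.log r ≤ R ^ ε₂ * r ^ (-ε₂) / ε₂ := by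
      have h0 : Real.log R - Real.log r = Real.log (R / r) :=
        (Real.log_div hR.ne' hr0.ne').symm
      have h3 := Real.log_le_rpow_div (div_nonneg hR.le hr0.le) hε0
      rw [Real.div_rpow hR.le hr0.le] at h3
      rw [h0]
      refine h3.trans (le_of_eq ?_)
      rw [div_eq_mul_inv (R ^ ε₂), ← Real.rpow_neg hr0.le]
    calc Fl (r, z) = Γ (r, z) ^ 2 * r ^ (2 * ε₂ - 1) := e
      _ ≤ ((Real.log R - Real.log r) * E z) * r ^ (2 * ε₂ - 1) :=
          mul_le_mul_of_nonneg_right h1 (Real.rpow_nonneg hr0.le _)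
      _ ≤ ((R ^ ε₂ * r ^ (-ε₂) / ε₂) * E z) * r ^ (2 * ε₂ - 1) :=
          mul_le_mul_of_nonneg_right
            (mul_le_mul_of_nonneg_right hlog (hEnn z)) (Real.rpow_nonneg hr0.le _)
      _ = (C * E z) * (r ^ (-ε₂) * r ^ (2 * ε₂ - 1)) := by rw [hC]; ring
      _ = (C * E z) * r ^ (ε₂ - 1) := by
          rw [← Real.rpow_add hr0]
          ring_nf
  -- measurability
  have hΓm : Measurable Γ := hΓ.continuous.measurable
  have hrpm : Measurable fun x : ℝ => x ^ (1 - ε₂) := by fun_prop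
  have hFlm : Measurable Fl := by
    apply Measurable.mul
    · exact ((hΓm.div (hrpm.comp measurable_fst)).abs.pow measurable_const)
    · exact measurable_fst
  -- conversions to lintegral
  set La : ENNReal := ∫⁻ p in S, ENNReal.ofReal (Fl p) with hLa
  set Lb : ENNReal := ∫⁻ p in S, ENNReal.ofReal (Fr p) with hLb
  have hFlnn : 0 ≤ᵐ[volume.restrict S] Fl :=
    (ae_restrict_iff' hSm).2 (Filter.Eventually.of_forall fun p hp =>
      mul_nonneg (pow_nonneg (abs_nonneg _) 2) hp.1.1.le)
  have hFrnn : 0 ≤ᵐ[volume.restrict S] Fr :=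
    (ae_restrict_iff' hSm).2 (Filter.Eventually.of_forall fun p hp =>
      mul_nonneg (sq_nonneg _) hp.1.1.le)
  have hA : ∫ p in S, Fl p = La.toReal :=
    integral_eq_lintegral_of_nonneg_ae hFlnn hFlm.aestronglyMeasurable
  have hB : ∫ p in S, Fr p = Lb.toReal :=
    integral_eq_lintegral_of_nonneg_ae hFrnn hFrc.aestronglyMeasurable
  -- Lb finite
  have hLbfin : Lb ≠ ⊤ := by
    obtain ⟨M, hM⟩ := ((isCompact_Icc (a := (0:ℝ)) (b := R)).prod
      (isCompact_Icc (a := -a) (b := a))).exists_bound_of_continuousOn hFrc.continuousOn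
    have hsub : S ⊆ Icc (0:ℝ) R ×ˢ Icc (-a) a :=
      prod_mono Ioo_subset_Icc_self Ioo_subset_Icc_self
    have h1 : Lb ≤ ENNReal.ofReal M * volume S := by
      rw [hLb]
      calc ∫⁻ p in S, ENNReal.ofReal (Fr p) ≤ ∫⁻ _ in S, ENNReal.ofReal M :=
            lintegral_mono_ae ((ae_restrict_iff' hSm).2
              (Filter.Eventually.of_forall fun p hp =>
                ENNReal.ofReal_le_ofReal ((le_abs_self _).trans (hM p (hsub hp)))))
        _ = ENNReal.ofReal M * volume S := by
            rw [lintegral_const, Measure.restrict_apply_univ]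
    have h2 : volume S < ⊤ :=
      lt_of_le_of_lt (measure_mono hsub)
        (((isCompact_Icc.prod isCompact_Icc).measure_lt_top))
    exact ne_top_of_le_ne_top (ENNReal.mul_lt_top ENNReal.ofReal_lt_top h2).ne h1
  -- main ENNReal chain
  have hrpm2 : Measurable fun r : ℝ => ENNReal.ofReal (r ^ (ε₂ - 1)) := by
    apply Measurable.ennreal_ofReal; fun_prop
  have step1 : La ≤ ∫⁻ p in S,
      (ENNReal.ofReal C * ENNReal.ofReal (p.1 ^ (ε₂ - 1))) * ENNReal.ofReal (E p.2) := by
    refine lintegral_mono_ae ((ae_restrict_iff' hSm).2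
      (Filter.Eventually.of_forall fun p hp => ?_))
    calc ENNReal.ofReal (Fl p) ≤ ENNReal.ofReal ((C * E p.2) * p.1 ^ (ε₂ - 1)) :=
          ENNReal.ofReal_le_ofReal (hpt p hp)
      _ = (ENNReal.ofReal C * ENNReal.ofReal (p.1 ^ (ε₂ - 1))) * ENNReal.ofReal (E p.2) := by
          rw [ENNReal.ofReal_mul (mul_nonneg hC0 (hEnn _)), ENNReal.ofReal_mul hC0]
          ring
  have step2 : (∫⁻ p in S,
      (ENNReal.ofReal C * ENNReal.ofReal (p.1 ^ (ε₂ - 1))) * ENNReal.ofReal (E p.2)) =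
      (∫⁻ r in I1, ENNReal.ofReal C * ENNReal.ofReal (r ^ (ε₂ - 1))) *
        ∫⁻ z in I2, ENNReal.ofReal (E z) := by
    rw [hS, Measure.volume_eq_prod, ← Measure.prod_restrict]
    exact lintegral_prod_mul (measurable_const.mul hrpm2).aemeasurable
      (hEc.measurable.ennreal_ofReal.aemeasurable)
  have hK : (∫⁻ r in I1, ENNReal.ofReal (r ^ (ε₂ - 1))) = ENNReal.ofReal C := by
    rw [hI1, Measure.restrict_congr_set Ioo_ae_eq_Ioc]
    have hint : IntegrableOn (fun r : ℝ => r ^ (ε₂ - 1)) (Ioc 0 R) :=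
      (intervalIntegrable_iff_integrableOn_Ioc_of_le hR.le).1
        (_root_.intervalIntegral.intervalIntegrable_rpow' (by linarith))
    have hnn : 0 ≤ᵐ[volume.restrict (Ioc (0:ℝ) R)] fun r : ℝ => r ^ (ε₂ - 1) :=
      (ae_restrict_iff' measurableSet_Ioc).2 (Filter.Eventually.of_forall fun r hr =>
        Real.rpow_nonneg hr.1.le _)
    rw [← ofReal_integral_eq_lintegral_ofReal hint hnn]
    congr 1
    rw [← intervalIntegral.integral_of_le hR.le, integral_rpow (Or.inl (by linarith))]
    rw [Real.zero_rpow (by linarith : ε₂ - 1 + 1 ≠ 0), hC]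
    norm_num
  have hEz : (∫⁻ z in I2, ENNReal.ofReal (E z)) = Lb := by
    have hzeq : ∀ z : ℝ, ENNReal.ofReal (E z) =
        ∫⁻ s in I1, ENNReal.ofReal (Fr (s, z)) := by
      intro z
      have hcont : Continuous fun s : ℝ => Fr (s, z) :=
        hFrc.comp (continuous_id.prodMk continuous_const)
      have hint : IntegrableOn (fun s : ℝ => Fr (s, z)) (Ioc 0 R) :=
        hcont.integrableOn_Ioc
      have hnn : 0 ≤ᵐ[volume.restrict (Ioc (0:ℝ) R)] fun s : ℝ => Fr (s, z) :=
        (ae_restrict_iff' measurableSet_Ioc).2 (Filter.Eventually.of_forall fun s hs =>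
          mul_nonneg (sq_nonneg _) hs.1.le)
      rw [hI1, Measure.restrict_congr_set Ioo_ae_eq_Ioc,
        ← ofReal_integral_eq_lintegral_ofReal hint hnn, hE]
      congr 1
      exact intervalIntegral.integral_of_le hR.le
    rw [hLb, hS, Measure.volume_eq_prod, ← Measure.prod_restrict,
      lintegral_prod_symm _ (hFrc.measurable.ennreal_ofReal.aemeasurable)]
    exact (lintegral_congr fun z => (hzeq z).symm).symm
  have chain : La ≤ ENNReal.ofReal C * ENNReal.ofReal C * Lb := by
    refine step1.trans (le_of_eq ?_)
    rw [step2, hEz, lintegral_const_mul' _ _ ENNReal.ofReal_ne_top, hK]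
  -- back to real
  have hABle : ∫ p in S, Fl p ≤ C ^ 2 * ∫ p in S, Fr p := by
    rw [hA, hB]
    have hfin : ENNReal.ofReal C * ENNReal.ofReal C * Lb ≠ ⊤ :=
      ENNReal.mul_ne_top (ENNReal.mul_ne_top ENNReal.ofReal_ne_top ENNReal.ofReal_ne_top) hLbfin
    have := ENNReal.toReal_mono hfin chain
    rwa [ENNReal.toReal_mul, ENNReal.toReal_mul, ENNReal.toReal_ofReal hC0, ← sq] at this
  have hsq := Real.sqrt_le_sqrt hABle
  refine hsq.trans (le_of_eq ?_)
  rw [Real.sqrt_mul (sq_nonneg C), Real.sqrt_sq hC0, hC]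
  rw [hB]
  ring
end

section
/- Let ψ₁ be a smooth solution of -ψ₁,rr - ψ₁,zz - (3/r)ψ₁,r = ω₁ in Ω = (0,R)×(-a,a) with ψ₁|_{r=R} = 0, periodicity in z, and ψ₁,r(0,z) = 0. If ‖ψ₁,zz‖_{L²(Ω, r dr dz)} ≤ A and ‖ω₁‖_{L²(Ω, r dr dz)} ≤ B, then ∫_Ω |ψ₁,r/r|² r dr dz + (1/2)∫_{-a}^{a} ψ₁,r²(R,z) dz ≤ c(A² + B²) for a universal constant c. -/
open Real Set MeasureTheory intervalIntegral

open scoped ENNReal NNReal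

lemma oneD {R : ℝ} (hR : 0 < R) (u q : ℝ → ℝ) (hu : ContDiff ℝ (⊤ : ℕ∞) u) (hq : Continuous q)
    (hu0 : u 0 = 0) :
    (∫⁻ r in Ioo 0 R, ENNReal.ofReal (|u r / r| ^ 2 * r)) ≤
      (∫⁻ r in Ioo 0 R,
        ENNReal.ofReal ((q r ^ 2 + (-(deriv u r) - q r - (3 / r) * u r) ^ 2) * r)) ∧
    ENNReal.ofReal ((1 / 2) * u R ^ 2) ≤
      (∫⁻ r in Ioo 0 R,
        ENNReal.ofReal ((q r ^ 2 + (-(deriv u r) - q r - (3 / r) * u r) ^ 2) * r)) := by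
  have hud : ∀ r, HasDerivAt u (deriv u r) r := fun r =>
    ((hu.differentiable (by simp)) r).hasDerivAt
  have hu' : Continuous (deriv u) := hu.continuous_deriv (by simp)
  have huc : Continuous u := hu.continuous
  set w : ℝ → ℝ := fun r => if r = 0 then deriv u 0 else u r / r with hw_def
  have hw : Continuous w := by
    rw [continuous_iff_continuousAt]
    intro x
    rcases eq_or_ne x 0 with rfl | hx
    · have hslope : Filter.Tendsto (slope u 0) (nhdsWithin 0 {0}ᶜ) (nhds (deriv u 0)) :=
        hasDerivAt_iff_tendsto_slope.1 (hud 0)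
      have h1 : Filter.Tendsto w (nhdsWithin 0 {0}ᶜ) (nhds (deriv u 0)) := by
        refine hslope.congr' ?_
        filter_upwards [self_mem_nhdsWithin] with y hy
        have hy' : y ≠ 0 := hy
        simp [slope, hw_def, hy', hu0, div_eq_inv_mul]
      have h2 : Filter.Tendsto w (pure 0) (nhds (deriv u 0)) := by
        have hw0 : w 0 = deriv u 0 := by simp [hw_def]
        rw [← hw0]
        exact tendsto_pure_nhds w 0
      have hsup : nhdsWithin (0:ℝ) {0}ᶜ ⊔ pure 0 = nhds 0 := nhdsNE_sup_pure 0
      have : Filter.Tendsto w (nhds 0) (nhds (deriv u 0)) := by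
        rw [← hsup]; exact h1.sup h2
      have hw0 : w 0 = deriv u 0 := by simp [hw_def]
      rw [ContinuousAt, hw0]; exact this
    · have hev : ∀ᶠ y in nhds x, (fun y => u y / y) y = w y := by
        filter_upwards [isOpen_compl_singleton.mem_nhds hx] with y hy
        have hy' : y ≠ 0 := hy
        simp [hw_def, hy']
      exact (continuousAt_congr hev).mp (huc.continuousAt.div continuousAt_id hx)
  have hwu : ∀ r, u r = r * w r := by
    intro r
    rcases eq_or_ne r 0 with rfl | hr
    · simp [hu0]
    · simp only [hw_def, if_neg hr]
      field_simp
  set s : ℝ → ℝ := fun r => deriv u r + 3 * w r with hs_def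
  have hs : Continuous s := hu'.add (continuous_const.mul hw)
  set G : ℝ → ℝ := fun r => (q r ^ 2 + (s r + q r) ^ 2) * r with hG_def
  have hG : Continuous G := by fun_prop
  have hftc : ∫ r in (0:ℝ)..R, (2 : ℝ) * u r * deriv u r = u R ^ 2 := by
    have := intervalIntegral.integral_eq_sub_of_hasDerivAt
      (f := fun r => u r ^ 2) (f' := fun r => 2 * u r * deriv u r) (a := (0:ℝ)) (b := R)
      (fun x _ => by simpa using (hud x).fun_pow 2)
      (((continuous_const.mul huc).mul hu').intervalIntegrable _ _)
    simpa [hu0] using this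
  set X : ℝ := ∫ r in (0:ℝ)..R, w r * u r with hX_def
  set IG : ℝ := ∫ r in (0:ℝ)..R, G r with hIG_def
  have hX0 : 0 ≤ X := by
    apply intervalIntegral.integral_nonneg hR.le
    intro r hr
    rw [hwu r]
    have h : w r * (r * w r) = r * w r ^ 2 := by ring
    rw [h]
    exact mul_nonneg hr.1 (sq_nonneg _)
  have hIG0 : 0 ≤ IG := by
    apply intervalIntegral.integral_nonneg hR.le
    intro r hr
    exact mul_nonneg (by positivity) hr.1
  have hmono : ∫ r in (0:ℝ)..R, s r * u r ≤ ∫ r in (0:ℝ)..R, (G r + (1/2) * (w r * u r)) := by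
    apply intervalIntegral.integral_mono_on hR.le
    · exact (hs.mul huc).intervalIntegrable _ _
    · exact (hG.add (continuous_const.mul (hw.mul huc))).intervalIntegrable _ _
    · intro r hr
      have hr0 : (0:ℝ) ≤ r := hr.1
      have hu_eq := hwu r
      simp only [hG_def]
      rw [hu_eq]
      have hid : (q r ^ 2 + (s r + q r) ^ 2) * r + 1/2 * (w r * (r * w r)) - s r * (r * w r)
          = (r * (s r - w r) ^ 2) / 2 + (r * (s r + 2 * q r) ^ 2) / 2 := by ring
      nlinarith [mul_nonneg hr0 (sq_nonneg (s r - w r)), mul_nonneg hr0 (sq_nonneg (s r + 2 * q r)), hid]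
  have hsu : ∫ r in (0:ℝ)..R, s r * u r = (1/2) * u R ^ 2 + 3 * X := by
    have h1 : ∀ r, s r * u r = (1/2) * (2 * u r * deriv u r) + 3 * (w r * u r) := by
      intro r; simp only [hs_def]; ring
    rw [intervalIntegral.integral_congr (fun r _ => h1 r)]
    rw [intervalIntegral.integral_add
      ((by fun_prop : Continuous fun r => (1/2 : ℝ) * (2 * u r * deriv u r)).intervalIntegrable _ _)
      ((by fun_prop : Continuous fun r => (3:ℝ) * (w r * u r)).intervalIntegrable _ _)]
    rw [intervalIntegral.integral_const_mul, intervalIntegral.integral_const_mul, hftc]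
  have hrhs : ∫ r in (0:ℝ)..R, (G r + (1/2) * (w r * u r)) = IG + (1/2) * X := by
    rw [intervalIntegral.integral_add (hG.intervalIntegrable _ _)
      ((by fun_prop : Continuous fun r => (1/2:ℝ) * (w r * u r)).intervalIntegrable _ _)]
    rw [intervalIntegral.integral_const_mul]
  have hkey : (1/2) * u R ^ 2 + (5/2) * X ≤ IG := by
    rw [hsu, hrhs] at hmono; linarith
  have hIoo : ∀ f : ℝ → ℝ, Continuous f → ∫ r in Ioo (0:ℝ) R, f r = ∫ r in (0:ℝ)..R, f r := by
    intro f hf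
    rw [intervalIntegral.integral_of_le hR.le, MeasureTheory.integral_Ioc_eq_integral_Ioo]
  have hlhs_eq : (∫⁻ r in Ioo 0 R, ENNReal.ofReal (|u r / r| ^ 2 * r)) = ENNReal.ofReal X := by
    have hcongr : ∀ r ∈ Ioo (0:ℝ) R, ENNReal.ofReal (|u r / r| ^ 2 * r)
        = ENNReal.ofReal (w r * u r) := by
      intro r hr
      have hr0 : r ≠ 0 := ne_of_gt hr.1
      congr 1
      rw [sq_abs]
      simp only [hw_def, if_neg hr0]
      field_simp
    rw [setLIntegral_congr_fun measurableSet_Ioo hcongr]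
    rw [← MeasureTheory.ofReal_integral_eq_lintegral_ofReal]
    · rw [hIoo (fun r => w r * u r) (hw.mul huc)]
    · exact ((hw.mul huc).integrableOn_Icc).mono_set Ioo_subset_Icc_self
    · rw [Filter.EventuallyLE, ae_restrict_iff' measurableSet_Ioo]
      filter_upwards with r hr
      rw [hwu r]
      have h : w r * (r * w r) = r * w r ^ 2 := by ring
      rw [h]
      exact mul_nonneg hr.1.le (sq_nonneg _)
  have hrhs_eq : (∫⁻ r in Ioo 0 R,
      ENNReal.ofReal ((q r ^ 2 + (-(deriv u r) - q r - (3 / r) * u r) ^ 2) * r))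
      = ENNReal.ofReal IG := by
    have hcongr : ∀ r ∈ Ioo (0:ℝ) R,
        ENNReal.ofReal ((q r ^ 2 + (-(deriv u r) - q r - (3 / r) * u r) ^ 2) * r)
          = ENNReal.ofReal (G r) := by
      intro r hr
      have hr0 : r ≠ 0 := ne_of_gt hr.1
      have h3 : (3 / r) * u r = 3 * w r := by
        rw [hwu r]; field_simp
      congr 1
      simp only [hG_def, hs_def, h3]
      ring
    rw [setLIntegral_congr_fun measurableSet_Ioo hcongr]
    rw [← MeasureTheory.ofReal_integral_eq_lintegral_ofReal
      ((hG.integrableOn_Icc).mono_set Ioo_subset_Icc_self)]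
    · rw [hIoo _ hG]
    · rw [Filter.EventuallyLE, ae_restrict_iff' measurableSet_Ioo]
      filter_upwards with r hr
      exact mul_nonneg (by positivity) hr.1.le
  rw [hlhs_eq, hrhs_eq]
  constructor
  · exact ENNReal.ofReal_le_ofReal (by nlinarith)
  · exact ENNReal.ofReal_le_ofReal (by nlinarith)

lemma partial_fst_eq (f : ℝ × ℝ → ℝ) (hf : Differentiable ℝ f) (r z : ℝ) :
    deriv (fun r' => f (r', z)) r = fderiv ℝ f (r, z) (1, 0) := by
  have h1 : HasDerivAt (fun r' : ℝ => (r', z)) ((1 : ℝ), (0 : ℝ)) r :=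
    (hasDerivAt_id r).prodMk (hasDerivAt_const r z)
  exact ((hf (r, z)).hasFDerivAt.comp_hasDerivAt r h1).deriv

lemma partial_fst_hasDerivAt (f : ℝ × ℝ → ℝ) (hf : Differentiable ℝ f) (r z : ℝ) :
    HasDerivAt (fun r' => f (r', z)) (fderiv ℝ f (r, z) (1, 0)) r := by
  have h1 : HasDerivAt (fun r' : ℝ => (r', z)) ((1 : ℝ), (0 : ℝ)) r :=
    (hasDerivAt_id r).prodMk (hasDerivAt_const r z)
  exact (hf (r, z)).hasFDerivAt.comp_hasDerivAt r h1

lemma partial_snd_eq (f : ℝ × ℝ → ℝ) (hf : Differentiable ℝ f) (r z : ℝ) :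
    deriv (fun z' => f (r, z')) z = fderiv ℝ f (r, z) (0, 1) := by
  have h1 : HasDerivAt (fun z' : ℝ => (r, z')) ((0 : ℝ), (1 : ℝ)) z :=
    (hasDerivAt_const z r).prodMk (hasDerivAt_id z)
  exact ((hf (r, z)).hasFDerivAt.comp_hasDerivAt z h1).deriv

lemma fderiv_apply_smooth (f : ℝ × ℝ → ℝ) (hf : ContDiff ℝ (⊤ : ℕ∞) f) (v : ℝ × ℝ) :
    ContDiff ℝ (⊤ : ℕ∞) (fun p => fderiv ℝ f p v) :=
  (hf.fderiv_right (le_refl _)).clm_apply contDiff_const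


/-- Partial derivative in the first (radial) variable. -/
noncomputable def pderivR (f : ℝ → ℝ → ℝ) : ℝ → ℝ → ℝ :=
  fun r z => deriv (fun r' => f r' z) r

/-- Partial derivative in the second (axial) variable. -/
noncomputable def pderivZ (f : ℝ → ℝ → ℝ) : ℝ → ℝ → ℝ :=
  fun r z => deriv (fun z' => f r z') z

theorem stream_function_radial_estimate :
    ∃ c : ℝ, 0 < c ∧
      ∀ (R a : ℝ), 0 < R → 0 < a →
      ∀ (ψ₁ ω₁ : ℝ → ℝ → ℝ) (A B : ℝ),
        ContDiff ℝ (⊤ : ℕ∞) (fun p : ℝ × ℝ => ψ₁ p.1 p.2) →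
        (∀ r z : ℝ, r ∈ Ioo (0 : ℝ) R → z ∈ Ioo (-a) a →
          -(pderivR (pderivR ψ₁) r z) - pderivZ (pderivZ ψ₁) r z -
            (3 / r) * pderivR ψ₁ r z = ω₁ r z) →
        (∀ z : ℝ, ψ₁ R z = 0) →
        (∀ r z : ℝ, ψ₁ r (z + 2 * a) = ψ₁ r z) →
        (∀ z : ℝ, pderivR ψ₁ 0 z = 0) →
        Real.sqrt (∫ p in Ioo (0 : ℝ) R ×ˢ Ioo (-a) a,
          (pderivZ (pderivZ ψ₁) p.1 p.2) ^ 2 * p.1) ≤ A →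
        Real.sqrt (∫ p in Ioo (0 : ℝ) R ×ˢ Ioo (-a) a,
          (ω₁ p.1 p.2) ^ 2 * p.1) ≤ B →
        (∫ p in Ioo (0 : ℝ) R ×ˢ Ioo (-a) a,
            |pderivR ψ₁ p.1 p.2 / p.1| ^ 2 * p.1) +
          (1 / 2) * (∫ z in (-a)..a, (pderivR ψ₁ R z) ^ 2) ≤
        c * (A ^ 2 + B ^ 2) := by
  refine ⟨2, by norm_num, ?_⟩
  intro R a hR ha ψ₁ ω₁ A B hψ hpde hbc hper hax hA hB
  set F : ℝ × ℝ → ℝ := fun p => ψ₁ p.1 p.2 with hF_def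
  have hFd : Differentiable ℝ F := hψ.differentiable (by simp)
  set U : ℝ × ℝ → ℝ := fun p => fderiv ℝ F p (1, 0) with hU_def
  have hUsm : ContDiff ℝ (⊤ : ℕ∞) U := fderiv_apply_smooth F hψ _
  have hUd : Differentiable ℝ U := hUsm.differentiable (by simp)
  set V : ℝ × ℝ → ℝ := fun p => fderiv ℝ F p (0, 1) with hV_def
  have hVsm : ContDiff ℝ (⊤ : ℕ∞) V := fderiv_apply_smooth F hψ _
  have hVd : Differentiable ℝ V := hVsm.differentiable (by simp)
  set Urr : ℝ × ℝ → ℝ := fun p => fderiv ℝ U p (1, 0) with hUrr_def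
  have hUrrsm : ContDiff ℝ (⊤ : ℕ∞) Urr := fderiv_apply_smooth U hUsm _
  set Q : ℝ × ℝ → ℝ := fun p => fderiv ℝ V p (0, 1) with hQ_def
  have hQsm : ContDiff ℝ (⊤ : ℕ∞) Q := fderiv_apply_smooth V hVsm _
  -- identifications
  have hU_eq : ∀ r z, pderivR ψ₁ r z = U (r, z) := fun r z =>
    partial_fst_eq F hFd r z
  have hV_eq : ∀ r z, pderivZ ψ₁ r z = V (r, z) := fun r z =>
    partial_snd_eq F hFd r z
  have hUrr_eq : ∀ r z, pderivR (pderivR ψ₁) r z = Urr (r, z) := by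
    intro r z
    have h : (fun r' => pderivR ψ₁ r' z) = fun r' => U (r', z) := funext fun r' => hU_eq r' z
    show deriv (fun r' => pderivR ψ₁ r' z) r = Urr (r, z)
    rw [h]
    exact partial_fst_eq U hUd r z
  have hQ_eq : ∀ r z, pderivZ (pderivZ ψ₁) r z = Q (r, z) := by
    intro r z
    have h : (fun z' => pderivZ ψ₁ r z') = fun z' => V (r, z') := funext fun z' => hV_eq r z'
    show deriv (fun z' => pderivZ ψ₁ r z') z = Q (r, z)
    rw [h]
    exact partial_snd_eq V hVd r z
  set E : ℝ × ℝ → ℝ := fun p => -(Urr p) - Q p - (3 / p.1) * U p with hE_def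
  have hEmeas : Measurable E := by
    apply Measurable.sub
    · exact hUrrsm.continuous.measurable.neg.sub hQsm.continuous.measurable
    · exact (measurable_const.div measurable_fst).mul hUsm.continuous.measurable
  set S : Set (ℝ × ℝ) := Ioo (0 : ℝ) R ×ˢ Ioo (-a) a with hS_def
  have hSm : MeasurableSet S := measurableSet_Ioo.prod measurableSet_Ioo
  have hEω : ∀ p ∈ S, E p = ω₁ p.1 p.2 := by
    rintro ⟨r, z⟩ ⟨hr, hz⟩
    have := hpde r z hr hz
    rw [hUrr_eq, hQ_eq, hU_eq] at this
    exact this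
  -- per-z estimate
  have hz1 : ∀ z : ℝ,
      (∫⁻ r in Ioo 0 R, ENNReal.ofReal (|U (r, z) / r| ^ 2 * r)) ≤
        (∫⁻ r in Ioo 0 R, ENNReal.ofReal ((Q (r, z) ^ 2 + E (r, z) ^ 2) * r)) ∧
      ENNReal.ofReal ((1 / 2) * U (R, z) ^ 2) ≤
        (∫⁻ r in Ioo 0 R, ENNReal.ofReal ((Q (r, z) ^ 2 + E (r, z) ^ 2) * r)) := by
    intro z
    have husm : ContDiff ℝ (⊤ : ℕ∞) (fun r => U (r, z)) :=
      hUsm.comp (contDiff_id.prodMk contDiff_const)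
    have hqc : Continuous (fun r => Q (r, z)) :=
      hQsm.continuous.comp (continuous_id.prodMk continuous_const)
    have hu0 : U (0, z) = 0 := by rw [← hU_eq]; exact hax z
    have h : (∫⁻ r in Ioo 0 R, ENNReal.ofReal (|U (r, z) / r| ^ 2 * r)) ≤
        (∫⁻ r in Ioo 0 R, ENNReal.ofReal ((Q (r, z) ^ 2 +
          (-(deriv (fun r' => U (r', z)) r) - Q (r, z) - (3 / r) * U (r, z)) ^ 2) * r)) ∧
        ENNReal.ofReal ((1 / 2) * U (R, z) ^ 2) ≤
        (∫⁻ r in Ioo 0 R, ENNReal.ofReal ((Q (r, z) ^ 2 +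
          (-(deriv (fun r' => U (r', z)) r) - Q (r, z) - (3 / r) * U (r, z)) ^ 2) * r)) :=
      oneD hR (fun r => U (r, z)) (fun r => Q (r, z)) husm hqc hu0
    have hder : ∀ r : ℝ, deriv (fun r' => U (r', z)) r = Urr (r, z) := fun r =>
      partial_fst_eq U hUd r z
    simp only [hder] at h
    exact h
  -- Tonelli setup
  have hμprod : (volume : Measure (ℝ × ℝ)).restrict S =
      (volume.restrict (Ioo (0 : ℝ) R)).prod (volume.restrict (Ioo (-a) a)) := by
    rw [hS_def, Measure.volume_eq_prod, Measure.prod_restrict]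
  have hton : ∀ f : ℝ × ℝ → ℝ≥0∞, Measurable f →
      ∫⁻ p in S, f p = ∫⁻ z in Ioo (-a) a, ∫⁻ r in Ioo 0 R, f (r, z) := by
    intro f hf
    rw [hμprod]
    exact lintegral_prod_symm f hf.aemeasurable
  set f1 : ℝ × ℝ → ℝ≥0∞ := fun p => ENNReal.ofReal (|U p / p.1| ^ 2 * p.1) with hf1
  have hf1m : Measurable f1 :=
    (((hUsm.continuous.measurable.div measurable_fst).abs.pow_const 2).mul
      measurable_fst).ennreal_ofReal
  set f2 : ℝ × ℝ → ℝ≥0∞ := fun p => ENNReal.ofReal ((Q p ^ 2 + E p ^ 2) * p.1) with hf2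
  have hf2m : Measurable f2 :=
    (((hQsm.continuous.measurable.pow_const 2).add (hEmeas.pow_const 2)).mul
      measurable_fst).ennreal_ofReal
  set T : ℝ≥0∞ := ∫⁻ p in S, f2 p with hT
  have hT1 : (∫⁻ p in S, f1 p) ≤ T := by
    rw [hT, hton f1 hf1m, hton f2 hf2m]
    exact lintegral_mono fun z => (hz1 z).1
  have hTb : (∫⁻ z in Ioo (-a) a, ENNReal.ofReal ((1 / 2) * U (R, z) ^ 2)) ≤ T := by
    rw [hT, hton f2 hf2m]
    exact lintegral_mono fun z => (hz1 z).2
  set g1 : ℝ × ℝ → ℝ≥0∞ := fun p => ENNReal.ofReal (Q p ^ 2 * p.1) with hg1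
  set g2 : ℝ × ℝ → ℝ≥0∞ := fun p => ENNReal.ofReal (E p ^ 2 * p.1) with hg2
  have hg1m : Measurable g1 :=
    ((hQsm.continuous.measurable.pow_const 2).mul measurable_fst).ennreal_ofReal
  have hg2m : Measurable g2 := ((hEmeas.pow_const 2).mul measurable_fst).ennreal_ofReal
  have hsplit : T ≤ (∫⁻ p in S, g1 p) + ∫⁻ p in S, g2 p := by
    rw [hT, ← lintegral_add_left hg1m]
    apply lintegral_mono
    intro p
    have hq : (Q p ^ 2 + E p ^ 2) * p.1 = Q p ^ 2 * p.1 + E p ^ 2 * p.1 := by ring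
    calc ENNReal.ofReal ((Q p ^ 2 + E p ^ 2) * p.1)
        = ENNReal.ofReal (Q p ^ 2 * p.1 + E p ^ 2 * p.1) := by rw [hq]
      _ ≤ ENNReal.ofReal (Q p ^ 2 * p.1) + ENNReal.ofReal (E p ^ 2 * p.1) :=
          ENNReal.ofReal_add_le
  -- bounds on S
  set K : Set (ℝ × ℝ) := Icc (0 : ℝ) R ×ˢ Icc (-a) a with hK
  have hKc : IsCompact K := isCompact_Icc.prod isCompact_Icc
  obtain ⟨C1, hC1⟩ := hKc.exists_bound_of_continuousOn hUrrsm.continuous.continuousOn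
  obtain ⟨C2, hC2⟩ := hKc.exists_bound_of_continuousOn hQsm.continuous.continuousOn
  have hSK : S ⊆ K := prod_mono Ioo_subset_Icc_self Ioo_subset_Icc_self
  have hUb : ∀ p ∈ S, |U p| ≤ C1 * p.1 := by
    rintro ⟨r, z⟩ ⟨hr, hz⟩
    have hz' : z ∈ Icc (-a) a := Ioo_subset_Icc_self hz
    have hder : ∀ x ∈ Icc (0 : ℝ) R,
        HasDerivWithinAt (fun r' => U (r', z)) (Urr (x, z)) (Icc 0 R) x :=
      fun x _ => (partial_fst_hasDerivAt U hUd x z).hasDerivWithinAt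
    have hbd : ∀ x ∈ Icc (0 : ℝ) R, ‖Urr (x, z)‖ ≤ C1 := fun x hx => hC1 (x, z) ⟨hx, hz'⟩
    have hkey := (convex_Icc (0 : ℝ) R).norm_image_sub_le_of_norm_hasDerivWithin_le hder hbd
      (left_mem_Icc.2 hR.le) (Ioo_subset_Icc_self hr)
    have h0 : U (0, z) = 0 := by rw [← hU_eq]; exact hax z
    rw [h0, sub_zero, sub_zero] at hkey
    simpa [Real.norm_eq_abs, abs_of_nonneg hr.1.le] using hkey
  have hC1n : 0 ≤ C1 :=
    le_trans (norm_nonneg _) (hC1 (0, 0) ⟨⟨le_rfl, hR.le⟩, ⟨neg_nonpos.2 ha.le, ha.le⟩⟩)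
  have hEb : ∀ p ∈ S, E p ^ 2 * p.1 ≤ (C1 + C2 + 3 * C1) ^ 2 * R := by
    rintro ⟨r, z⟩ hp
    have hr : r ∈ Ioo (0 : ℝ) R := hp.1
    have h1 : ‖Urr (r, z)‖ ≤ C1 := hC1 _ (hSK hp)
    have h2 : ‖Q (r, z)‖ ≤ C2 := hC2 _ (hSK hp)
    have h3 : |U (r, z)| ≤ C1 * r := hUb (r, z) hp
    have hr0 : (0 : ℝ) < r := hr.1
    have h4 : |3 / r * U (r, z)| ≤ 3 * C1 := by
      rw [abs_mul, abs_of_pos (show (0 : ℝ) < 3 / r by positivity)]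
      calc 3 / r * |U (r, z)| ≤ 3 / r * (C1 * r) :=
            mul_le_mul_of_nonneg_left h3 (by positivity)
        _ = 3 * C1 := by field_simp
    have habs : |E (r, z)| ≤ C1 + C2 + 3 * C1 := by
      have e1 : E (r, z) = (-(Urr (r, z)) - Q (r, z)) - 3 / r * U (r, z) := rfl
      rw [e1]
      calc |(-(Urr (r, z)) - Q (r, z)) - 3 / r * U (r, z)|
          ≤ |(-(Urr (r, z)) - Q (r, z))| + |3 / r * U (r, z)| := by
            rw [sub_eq_add_neg]
            exact (abs_add_le _ _).trans_eq (by rw [abs_neg])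
        _ ≤ (|(-(Urr (r, z)))| + |Q (r, z)|) + (3 * C1) := by
            refine add_le_add ?_ h4
            rw [sub_eq_add_neg]
            exact (abs_add_le _ _).trans_eq (by simp)
        _ ≤ C1 + C2 + 3 * C1 := by
            rw [abs_neg]
            exact add_le_add (add_le_add h1 h2) le_rfl
    have hsq : E (r, z) ^ 2 ≤ (C1 + C2 + 3 * C1) ^ 2 := by
      rw [← sq_abs]
      exact pow_le_pow_left₀ (abs_nonneg _) habs 2
    calc E (r, z) ^ 2 * r ≤ (C1 + C2 + 3 * C1) ^ 2 * r :=
          mul_le_mul_of_nonneg_right hsq hr0.le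
      _ ≤ (C1 + C2 + 3 * C1) ^ 2 * R := mul_le_mul_of_nonneg_left hr.2.le (by positivity)
  have hvolS : volume S < ⊤ := lt_of_le_of_lt (measure_mono hSK) hKc.measure_lt_top
  have hG1le : (∫⁻ p in S, g1 p) ≤ ENNReal.ofReal (C2 ^ 2 * R) * volume S := by
    calc (∫⁻ p in S, g1 p) ≤ ∫⁻ _ in S, ENNReal.ofReal (C2 ^ 2 * R) := by
          apply setLIntegral_mono measurable_const
          intro p hp
          apply ENNReal.ofReal_le_ofReal
          have h2 : ‖Q p‖ ≤ C2 := hC2 _ (hSK hp)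
          have hsq : Q p ^ 2 ≤ C2 ^ 2 := by
            rw [← sq_abs]
            exact pow_le_pow_left₀ (abs_nonneg _) h2 2
          calc Q p ^ 2 * p.1 ≤ C2 ^ 2 * p.1 := mul_le_mul_of_nonneg_right hsq hp.1.1.le
            _ ≤ C2 ^ 2 * R := by
                have hc2 : (0:ℝ) ≤ C2 ^ 2 := sq_nonneg _
                exact mul_le_mul_of_nonneg_left hp.1.2.le hc2
      _ = ENNReal.ofReal (C2 ^ 2 * R) * volume S := setLIntegral_const _ _
  have hG2le : (∫⁻ p in S, g2 p) ≤ ENNReal.ofReal ((C1 + C2 + 3 * C1) ^ 2 * R) * volume S := by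
    calc (∫⁻ p in S, g2 p) ≤ ∫⁻ _ in S, ENNReal.ofReal ((C1 + C2 + 3 * C1) ^ 2 * R) := by
          apply setLIntegral_mono measurable_const
          intro p hp
          exact ENNReal.ofReal_le_ofReal (hEb p hp)
      _ = _ := setLIntegral_const _ _
  have hG1ne : (∫⁻ p in S, g1 p) ≠ ⊤ :=
    (lt_of_le_of_lt hG1le (ENNReal.mul_lt_top ENNReal.ofReal_lt_top hvolS)).ne
  have hG2ne : (∫⁻ p in S, g2 p) ≠ ⊤ :=
    (lt_of_le_of_lt hG2le (ENNReal.mul_lt_top ENNReal.ofReal_lt_top hvolS)).ne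
  have hTne : T ≠ ⊤ :=
    (lt_of_le_of_lt hsplit (ENNReal.add_lt_top.2
      ⟨lt_of_le_of_ne le_top hG1ne, lt_of_le_of_ne le_top hG2ne⟩)).ne
  -- real conversions
  have hnn1 : 0 ≤ᵐ[volume.restrict S] fun p : ℝ × ℝ => |U p / p.1| ^ 2 * p.1 := by
    rw [Filter.EventuallyLE, ae_restrict_iff' hSm]
    filter_upwards with p hp
    exact mul_nonneg (by positivity) hp.1.1.le
  have hI1 : (∫ p in S, |U p / p.1| ^ 2 * p.1) = (∫⁻ p in S, f1 p).toReal := by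
    rw [integral_eq_lintegral_of_nonneg_ae hnn1
      (((hUsm.continuous.measurable.div measurable_fst).abs.pow_const 2).mul
        measurable_fst).aestronglyMeasurable]
  have hI1le : (∫ p in S, |U p / p.1| ^ 2 * p.1) ≤ T.toReal := by
    rw [hI1]; exact ENNReal.toReal_mono hTne hT1
  have hJ1 : (1 / 2 : ℝ) * (∫ z in (-a)..a, U (R, z) ^ 2)
      = ∫ z in Ioo (-a) a, (1 / 2) * U (R, z) ^ 2 := by
    rw [intervalIntegral.integral_of_le (by linarith : -a ≤ a),
      MeasureTheory.integral_Ioc_eq_integral_Ioo, MeasureTheory.integral_const_mul]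
  have hJ2 : (∫ z in Ioo (-a) a, (1 / 2 : ℝ) * U (R, z) ^ 2)
      = (∫⁻ z in Ioo (-a) a, ENNReal.ofReal ((1 / 2) * U (R, z) ^ 2)).toReal := by
    refine integral_eq_lintegral_of_nonneg_ae (ae_of_all _ fun z => by positivity) ?_
    exact (Continuous.aestronglyMeasurable (by fun_prop))
  have hJle : (1 / 2 : ℝ) * (∫ z in (-a)..a, U (R, z) ^ 2) ≤ T.toReal := by
    rw [hJ1, hJ2]; exact ENNReal.toReal_mono hTne hTb
  have hQnn : 0 ≤ᵐ[volume.restrict S] fun p : ℝ × ℝ => Q p ^ 2 * p.1 := by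
    rw [Filter.EventuallyLE, ae_restrict_iff' hSm]
    filter_upwards with p hp
    exact mul_nonneg (sq_nonneg _) hp.1.1.le
  have hEnn : 0 ≤ᵐ[volume.restrict S] fun p : ℝ × ℝ => E p ^ 2 * p.1 := by
    rw [Filter.EventuallyLE, ae_restrict_iff' hSm]
    filter_upwards with p hp
    exact mul_nonneg (sq_nonneg _) hp.1.1.le
  have hQint : (∫⁻ p in S, g1 p).toReal = ∫ p in S, Q p ^ 2 * p.1 :=
    (integral_eq_lintegral_of_nonneg_ae hQnn
      ((hQsm.continuous.measurable.pow_const 2).mul measurable_fst).aestronglyMeasurable).symm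
  have hEint : (∫⁻ p in S, g2 p).toReal = ∫ p in S, E p ^ 2 * p.1 :=
    (integral_eq_lintegral_of_nonneg_ae hEnn
      ((hEmeas.pow_const 2).mul measurable_fst).aestronglyMeasurable).symm
  have hQfun : (∫ p in S, Q p ^ 2 * p.1)
      = ∫ p in S, (pderivZ (pderivZ ψ₁) p.1 p.2) ^ 2 * p.1 := by
    congr 1
    funext p
    rw [hQ_eq p.1 p.2, Prod.mk.eta]
  have hQA : (∫ p in S, (pderivZ (pderivZ ψ₁) p.1 p.2) ^ 2 * p.1) ≤ A ^ 2 := by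
    have h0 : 0 ≤ ∫ p in S, (pderivZ (pderivZ ψ₁) p.1 p.2) ^ 2 * p.1 :=
      setIntegral_nonneg hSm fun p hp => mul_nonneg (sq_nonneg _) hp.1.1.le
    calc (∫ p in S, (pderivZ (pderivZ ψ₁) p.1 p.2) ^ 2 * p.1)
        = Real.sqrt (∫ p in S, (pderivZ (pderivZ ψ₁) p.1 p.2) ^ 2 * p.1) ^ 2 :=
          (Real.sq_sqrt h0).symm
      _ ≤ A ^ 2 := pow_le_pow_left₀ (Real.sqrt_nonneg _) hA 2
  have hEfun : (∫ p in S, E p ^ 2 * p.1) = ∫ p in S, (ω₁ p.1 p.2) ^ 2 * p.1 :=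
    setIntegral_congr_fun hSm fun p hp => by rw [hEω p hp]
  have hEB : (∫ p in S, (ω₁ p.1 p.2) ^ 2 * p.1) ≤ B ^ 2 := by
    have h0 : 0 ≤ ∫ p in S, (ω₁ p.1 p.2) ^ 2 * p.1 :=
      setIntegral_nonneg hSm fun p hp => mul_nonneg (sq_nonneg _) hp.1.1.le
    calc (∫ p in S, (ω₁ p.1 p.2) ^ 2 * p.1)
        = Real.sqrt (∫ p in S, (ω₁ p.1 p.2) ^ 2 * p.1) ^ 2 := (Real.sq_sqrt h0).symm
      _ ≤ B ^ 2 := pow_le_pow_left₀ (Real.sqrt_nonneg _) hB 2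
  have hTreal : T.toReal ≤ A ^ 2 + B ^ 2 := by
    have h1 : T.toReal ≤ ((∫⁻ p in S, g1 p) + ∫⁻ p in S, g2 p).toReal :=
      ENNReal.toReal_mono (by rw [ENNReal.add_ne_top]; exact ⟨hG1ne, hG2ne⟩) hsplit
    rw [ENNReal.toReal_add hG1ne hG2ne, hQint, hEint, hQfun, hEfun] at h1
    linarith [hQA, hEB]
  have hgoal1 : (∫ p in S, |pderivR ψ₁ p.1 p.2 / p.1| ^ 2 * p.1)
      = ∫ p in S, |U p / p.1| ^ 2 * p.1 := by
    congr 1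
    funext p
    rw [hU_eq p.1 p.2, Prod.mk.eta]
  have hgoal2 : (∫ z in (-a)..a, (pderivR ψ₁ R z) ^ 2) = ∫ z in (-a)..a, U (R, z) ^ 2 := by
    congr 1
    funext z
    rw [hU_eq R z]
  rw [hgoal1, hgoal2]
  linarith [hI1le, hJle, hTreal]
end
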